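/- A tangent vector ξ ∈ T_xM belongs to the viscosity subdifferential D⁻f(x) if and only if liminf_{v → 0} [ (f∘exp_x)(v) − f(x) − ⟨ξ, v⟩_x ] / ‖v‖ ≥ 0. -/

import Mathlib

open scoped Topology RealInnerProductSpace
open Asymptotics Filter Metric MeasureTheory intervalIntegral

/-!
If `f - g` has a local minimum at `x` and `Dg(x) = ⟪ξ, ·⟫`, the first-order expansion of `g`
bounds `f (x + v) - f x - ⟪ξ, v⟫` from below by `-o(‖v‖)`, which is the liminf condition.

Conversely, the liminf condition says that the deficit `f x + ⟪ξ, v⟫ - f (x + v)` is at most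
`o(‖v‖)`. Its supremum over the ball of radius `t` is a monotone modulus `ρ(t) = o(t)`. The dyadic
average `t ↦ ∫₁² ρ (t u) du` of a monotone function is monotone and continuous away from `0`, so
averaging twice gives a function `φ ≥ ρ` that is `C¹` away from `0`, with derivative bounded by
`2 ρ(4|t|) / |t| → 0`; hence `φ` is `C¹` with `φ 0 = φ' 0 = 0`, and so is `v ↦ φ ‖v‖`. Then
`g y = f x + ⟪ξ, y - x⟫ - φ ‖y - x‖` touches `f` from below at `x`.
-/

noncomputable def dyadicAverage (ρ : ℝ → ℝ) (t : ℝ) : ℝ :=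
  ∫ u in (1 : ℝ)..2, ρ (t * u)

namespace dyadicAverage

variable {ρ : ℝ → ℝ} {t : ℝ}

lemma eq_inv_mul_integral (ht : t ≠ 0) :
    dyadicAverage ρ t = t⁻¹ * ∫ s in t..2 * t, ρ s := by
  rw [dyadicAverage, integral_comp_mul_left (fun s => ρ s) ht, mul_one, mul_comm t 2,
    smul_eq_mul]

lemma zero : dyadicAverage ρ 0 = ρ 0 := by
  norm_num [dyadicAverage]

lemma nonneg (hρ : ∀ s, 0 ≤ ρ s) : 0 ≤ dyadicAverage ρ t :=
  integral_nonneg one_le_two fun _ _ => hρ _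

lemma intervalIntegrable_comp_mul (hρ : Monotone ρ) (t a b : ℝ) :
    IntervalIntegrable (fun u => ρ (t * u)) volume a b := by
  rcases le_total 0 t with ht | ht
  · exact (hρ.comp fun _ _ h => mul_le_mul_of_nonneg_left h ht).intervalIntegrable
  · exact (hρ.comp_antitone fun _ _ h => mul_le_mul_of_nonpos_left h ht).intervalIntegrable

lemma monotone (hρ : Monotone ρ) : Monotone (dyadicAverage ρ) := fun s t hst =>
  integral_mono_on one_le_two (intervalIntegrable_comp_mul hρ s 1 2)
    (intervalIntegrable_comp_mul hρ t 1 2)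
    fun _ hu => hρ (mul_le_mul_of_nonneg_right hst (zero_le_one.trans hu.1))

lemma le_self (hρ : Monotone ρ) (ht : 0 ≤ t) : ρ t ≤ dyadicAverage ρ t := by
  calc ρ t = ∫ _ in (1 : ℝ)..2, ρ t := by norm_num
    _ ≤ _ := integral_mono_on one_le_two intervalIntegrable_const
        (intervalIntegrable_comp_mul hρ t 1 2)
        fun u hu => hρ (le_mul_of_one_le_right ht hu.1)

lemma le_two_mul (hρ : Monotone ρ) (ht : 0 ≤ t) : dyadicAverage ρ t ≤ ρ (2 * t) := by
  calc dyadicAverage ρ t ≤ ∫ _ in (1 : ℝ)..2, ρ (2 * t) :=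
        integral_mono_on one_le_two (intervalIntegrable_comp_mul hρ t 1 2)
          intervalIntegrable_const
          fun u hu => hρ (by rw [mul_comm]; exact mul_le_mul_of_nonneg_right hu.2 ht)
    _ = ρ (2 * t) := by norm_num

lemma eventuallyEq_primitive (hρ : Monotone ρ) (ht : t ≠ 0) :
    dyadicAverage ρ =ᶠ[𝓝 t]
      fun s => s⁻¹ * ((∫ r in (0 : ℝ)..2 * s, ρ r) - ∫ r in (0 : ℝ)..s, ρ r) := by
  filter_upwards [isOpen_ne.mem_nhds ht] with s hs
  rw [eq_inv_mul_integral hs, integral_interval_sub_left hρ.intervalIntegrable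
    hρ.intervalIntegrable]

lemma continuousAt (hρ : Monotone ρ) (ht : t ≠ 0) : ContinuousAt (dyadicAverage ρ) t := by
  have hF := continuous_primitive (μ := volume)
    (fun a b => hρ.intervalIntegrable (a := a) (b := b)) 0
  refine ContinuousAt.congr ?_ (eventuallyEq_primitive hρ ht).symm
  exact (continuousAt_inv₀ ht).mul
    ((hF.comp (continuous_const_mul 2)).sub hF).continuousAt

lemma hasDerivAt (hρ : Monotone ρ) (ht : t ≠ 0) (h₁ : ContinuousAt ρ t)
    (h₂ : ContinuousAt ρ (2 * t)) :
    HasDerivAt (dyadicAverage ρ)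
      (t⁻¹ * (2 * ρ (2 * t) - ρ t - dyadicAverage ρ t)) t := by
  have hF : ∀ s, ContinuousAt ρ s →
      HasDerivAt (fun u => ∫ r in (0 : ℝ)..u, ρ r) (ρ s) s := fun s hs =>
    integral_hasDerivAt_right hρ.intervalIntegrable
      hρ.measurable.stronglyMeasurable.stronglyMeasurableAtFilter hs
  have hdiff := ((hF (2 * t) h₂).comp t ((hasDerivAt_id t).const_mul 2)).sub (hF t h₁)
  refine (((hasDerivAt_inv ht).mul hdiff).congr_of_eventuallyEq
    (eventuallyEq_primitive hρ ht)).congr_deriv ?_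
  rw [(eventuallyEq_primitive hρ ht).eq_of_nhds]
  simp only [Pi.sub_apply, Function.comp_apply]
  field_simp
  ring

lemma le_two_mul_abs (hρ : Monotone ρ) (t : ℝ) : dyadicAverage ρ t ≤ ρ (2 * |t|) :=
  (monotone hρ (le_abs_self t)).trans (le_two_mul hρ (abs_nonneg t))

lemma dyadicAverage_le (hρ : Monotone ρ) (t : ℝ) :
    dyadicAverage (dyadicAverage ρ) t ≤ ρ (4 * |t|) := by
  refine (le_two_mul_abs (monotone hρ) t).trans ((le_two_mul_abs hρ _).trans (hρ ?_))
  rw [abs_mul, abs_two, abs_abs]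
  linarith

-- every term lies between `0` and `ρ (4 * |t|)`
lemma abs_two_mul_sub_sub_le (hρ : Monotone ρ) (hρ_nonneg : ∀ s, 0 ≤ ρ s) (t : ℝ) :
    |2 * dyadicAverage ρ (2 * t) - dyadicAverage ρ t - dyadicAverage (dyadicAverage ρ) t| ≤
      2 * ρ (4 * |t|) := by
  have h₁ : dyadicAverage ρ (2 * t) ≤ ρ (4 * |t|) :=
    (le_two_mul_abs hρ _).trans (hρ (by rw [abs_mul, abs_two]; linarith))
  have h₂ : dyadicAverage ρ t ≤ ρ (4 * |t|) :=
    (le_two_mul_abs hρ _).trans (hρ (by linarith [abs_nonneg t]))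
  have h₃ := dyadicAverage_le hρ t
  have h₀ : ∀ s, 0 ≤ dyadicAverage ρ s := fun _ => nonneg hρ_nonneg
  have h₀' : 0 ≤ dyadicAverage (dyadicAverage ρ) t := nonneg h₀
  rw [abs_le]
  constructor <;> nlinarith [h₀ t, h₀ (2 * t)]

end dyadicAverage

theorem contDiff_one_of_hasDerivAt_of_ne {f g : ℝ → ℝ} {x : ℝ}
    (hf : ∀ y ≠ x, HasDerivAt f (g y) y) (hfx : ContinuousAt f x) (hg : Continuous g) :
    ContDiff ℝ 1 f := by
  have hderiv : ∀ y, HasDerivAt f (g y) y := fun y => by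
    rcases eq_or_ne y x with rfl | hy
    · exact hasDerivAt_of_hasDerivAt_of_ne hf hfx hg.continuousAt
    · exact hf y hy
  rw [contDiff_one_iff_deriv]
  exact ⟨fun y => (hderiv y).differentiableAt, by
    rwa [show deriv f = g from funext fun y => (hderiv y).deriv]⟩

theorem exists_contDiff_one_le_of_isLittleO {ρ : ℝ → ℝ} (hρ : Monotone ρ)
    (hρ_nonneg : ∀ t, 0 ≤ ρ t) (hρo : ρ =o[𝓝 0] id) :
    ∃ φ : ℝ → ℝ, ContDiff ℝ 1 φ ∧ φ 0 = 0 ∧ HasDerivAt φ 0 0 ∧ ∀ t, 0 ≤ t → ρ t ≤ φ t := by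
  set ψ₁ := dyadicAverage ρ
  set ψ₂ := dyadicAverage ψ₁
  have hψ₁ : Monotone ψ₁ := dyadicAverage.monotone hρ
  have hψ₂_nonneg : ∀ t, 0 ≤ ψ₂ t := fun _ =>
    dyadicAverage.nonneg fun _ => dyadicAverage.nonneg hρ_nonneg
  have hψ₁_cont : ∀ t ≠ 0, ContinuousAt ψ₁ t := fun t => dyadicAverage.continuousAt hρ
  have hψ₂_zero : ψ₂ 0 = 0 := by
    simp only [ψ₂, ψ₁, dyadicAverage.zero]
    exact hρo.isBigO.eq_zero_imp.self_of_nhds rfl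
  set D : ℝ → ℝ := fun t => t⁻¹ * (2 * ψ₁ (2 * t) - ψ₁ t - ψ₂ t)
  have hD : ∀ t ≠ 0, HasDerivAt ψ₂ (D t) t := fun t ht =>
    dyadicAverage.hasDerivAt hψ₁ ht (hψ₁_cont t ht) (hψ₁_cont _ (mul_ne_zero two_ne_zero ht))
  have hRo : (fun t => ρ (4 * |t|)) =o[𝓝 0] id := by
    have h4 : Tendsto (fun t : ℝ => 4 * |t|) (𝓝 0) (𝓝 0) := by
      simpa using (continuous_abs.const_mul (4 : ℝ)).tendsto 0
    refine (hρo.comp_tendsto h4).trans_isBigO (IsBigO.of_bound 4 ?_)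
    simp
  have hDo : Tendsto D (𝓝 0) (𝓝 0) := by
    have hN : (fun t => 2 * ψ₁ (2 * t) - ψ₁ t - ψ₂ t) =o[𝓝 0] id := by
      refine (IsBigO.of_bound 2 (Eventually.of_forall fun t => ?_)).trans_isLittleO hRo
      rw [Real.norm_eq_abs, Real.norm_eq_abs, abs_of_nonneg (hρ_nonneg _)]
      exact dyadicAverage.abs_two_mul_sub_sub_le hρ hρ_nonneg t
    simpa [D, div_eq_inv_mul] using hN.tendsto_div_nhds_zero
  have hψ₂_cont : ContinuousAt ψ₂ 0 := by
    rw [ContinuousAt, hψ₂_zero]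
    refine squeeze_zero_norm (fun t => ?_) (hRo.trans_tendsto tendsto_id)
    rw [Real.norm_eq_abs, abs_of_nonneg (hψ₂_nonneg t)]
    exact dyadicAverage.dyadicAverage_le hρ t
  have hD_cont : Continuous D := continuous_iff_continuousAt.2 fun t => by
    rcases eq_or_ne t 0 with rfl | ht
    · simpa [ContinuousAt, D] using hDo
    · exact (continuousAt_inv₀ ht).mul ((continuousAt_const.mul ((hψ₁_cont _
        (mul_ne_zero two_ne_zero ht)).comp (continuous_const_mul 2).continuousAt)).sub
        (hψ₁_cont t ht) |>.sub (hD t ht).continuousAt)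
  refine ⟨ψ₂, contDiff_one_of_hasDerivAt_of_ne hD hψ₂_cont hD_cont, hψ₂_zero, ?_,
    fun t ht => (dyadicAverage.le_self hρ ht).trans (dyadicAverage.le_self hψ₁ ht)⟩
  simpa [D] using hasDerivAt_of_hasDerivAt_of_ne hD hψ₂_cont hD_cont.continuousAt

section

variable {E : Type*} [NormedAddCommGroup E]

theorem HasDerivAt.hasFDerivAt_comp_norm_zero [NormedSpace ℝ E] {φ : ℝ → ℝ}
    (hφ : HasDerivAt φ 0 0) :
    HasFDerivAt (fun v : E => φ ‖v‖) (0 : E →L[ℝ] ℝ) 0 := by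
  rw [hasDerivAt_iff_isLittleO_nhds_zero] at hφ
  rw [hasFDerivAt_iff_isLittleO_nhds_zero]
  exact isLittleO_norm_right.1
    (by simpa [Function.comp_def] using hφ.comp_tendsto (tendsto_norm_zero (E := E)))

theorem ContDiff.comp_norm_of_hasDerivAt_zero [InnerProductSpace ℝ E] {φ : ℝ → ℝ}
    (hφ : ContDiff ℝ 1 φ) (hφ0 : HasDerivAt φ 0 0) :
    ContDiff ℝ 1 (fun v : E => φ ‖v‖) := by
  have hzero := hφ0.hasFDerivAt_comp_norm_zero (E := E)
  have hne : ∀ v : E, v ≠ 0 → ContDiffAt ℝ 1 (fun v : E => φ ‖v‖) v := fun v hv =>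
    hφ.contDiffAt.comp v (contDiffAt_norm ℝ hv)
  have hbound : ∀ v : E, ‖fderiv ℝ (fun v : E => φ ‖v‖) v‖ ≤ |deriv φ ‖v‖| := fun v => by
    rcases eq_or_ne v 0 with rfl | hv
    · simp [hzero.fderiv]
    · have hnorm := ((contDiffAt_norm ℝ hv (n := 1)).differentiableAt one_ne_zero).hasFDerivAt
      rw [show (fun v : E => φ ‖v‖) = φ ∘ (Norm.norm : E → ℝ) from rfl,
        (((hφ.differentiable one_ne_zero) _).hasDerivAt.comp_hasFDerivAt v hnorm).fderiv,
        norm_smul, Real.norm_eq_abs]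
      exact mul_le_of_le_one_right (abs_nonneg _)
        (by simpa using norm_fderiv_le_of_lipschitz ℝ (lipschitzWith_one_norm (E := E)) (x₀ := v))
  refine contDiff_one_iff_fderiv.2 ⟨fun v => ?_, continuous_iff_continuousAt.2 fun v => ?_⟩ <;>
    rcases eq_or_ne v 0 with rfl | hv
  · exact hzero.differentiableAt
  · exact (hne v hv).differentiableAt one_ne_zero
  · have hderiv : Tendsto (fun v : E => |deriv φ ‖v‖|) (𝓝 0) (𝓝 0) := by
      simpa [hφ0.deriv] using
        ((hφ.continuous_deriv le_rfl).comp continuous_norm).abs.tendsto (0 : E)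
    rw [ContinuousAt, hzero.fderiv]
    exact squeeze_zero_norm hbound hderiv
  · exact (hne v hv).continuousAt_fderiv one_ne_zero

theorem exists_monotone_isLittleO_eventually_le {d : E → ℝ}
    (hd : ∀ ε > 0, ∀ᶠ v in 𝓝 0, d v ≤ ε * ‖v‖) :
    ∃ ρ : ℝ → ℝ, Monotone ρ ∧ (∀ t, 0 ≤ ρ t) ∧ ρ =o[𝓝 0] id ∧ ∀ᶠ v in 𝓝 0, d v ≤ ρ ‖v‖ := by
  -- truncating `d` to `[0, ‖v‖]` keeps it unchanged where it matters and makes the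
  -- suprema over balls finite
  set e : E → ℝ := fun v => min (max (d v) 0) ‖v‖
  set ρ : ℝ → ℝ := fun t => sSup (e '' closedBall 0 t)
  have hbdd : ∀ t, BddAbove (e '' closedBall 0 t) := fun t =>
    ⟨t, by rintro _ ⟨v, hv, rfl⟩; exact (min_le_right _ _).trans (mem_closedBall_zero_iff.1 hv)⟩
  have hρ_nonneg : ∀ t, 0 ≤ ρ t := fun t =>
    Real.sSup_nonneg (by rintro _ ⟨v, -, rfl⟩; exact le_min (le_max_right _ _) (norm_nonneg v))
  have he_le : ∀ v t, ‖v‖ ≤ t → e v ≤ ρ t := fun v t hv =>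
    le_csSup (hbdd t) ⟨v, mem_closedBall_zero_iff.2 hv, rfl⟩
  have hρ_le : ∀ t c, 0 ≤ c → (∀ v, ‖v‖ ≤ t → e v ≤ c) → ρ t ≤ c := fun t c hc h =>
    Real.sSup_le (by rintro _ ⟨v, hv, rfl⟩; exact h v (mem_closedBall_zero_iff.1 hv)) hc
  refine ⟨ρ, fun s t hst => hρ_le s _ (hρ_nonneg t) fun v hv => he_le v t (hv.trans hst),
    hρ_nonneg, isLittleO_iff.2 fun ε hε => ?_, ?_⟩
  · obtain ⟨δ, hδ, hsmall⟩ := Metric.eventually_nhds_iff.1 (hd ε hε)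
    filter_upwards [Metric.ball_mem_nhds (0 : ℝ) hδ] with t ht
    rw [mem_ball_zero_iff, Real.norm_eq_abs] at ht
    rw [Real.norm_eq_abs, abs_of_nonneg (hρ_nonneg t)]
    refine hρ_le t _ (by positivity) fun v hv => (min_le_left _ _).trans (max_le ?_ (by positivity))
    have hvδ : dist v 0 < δ := by rw [dist_zero_right]; linarith [le_abs_self t]
    exact (hsmall hvδ).trans (mul_le_mul_of_nonneg_left (hv.trans (le_abs_self t)) hε.le)
  · filter_upwards [hd 1 one_pos] with v hv
    have he : e v = max (d v) 0 := min_eq_left (max_le (by linarith) (norm_nonneg v))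
    exact (le_max_left _ _).trans (he ▸ he_le v _ le_rfl)

theorem exists_contDiff_one_eventually_le [InnerProductSpace ℝ E] {d : E → ℝ}
    (hd : ∀ ε > 0, ∀ᶠ v in 𝓝 0, d v ≤ ε * ‖v‖) :
    ∃ Φ : E → ℝ, ContDiff ℝ 1 Φ ∧ Φ 0 = 0 ∧ HasFDerivAt Φ (0 : E →L[ℝ] ℝ) 0 ∧
      ∀ᶠ v in 𝓝 0, d v ≤ Φ v := by
  obtain ⟨ρ, hρ, hρ_nonneg, hρo, hdρ⟩ := exists_monotone_isLittleO_eventually_le hd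
  obtain ⟨φ, hφ, hφ0, hφ'0, hρφ⟩ := exists_contDiff_one_le_of_isLittleO hρ hρ_nonneg hρo
  refine ⟨fun v => φ ‖v‖, hφ.comp_norm_of_hasDerivAt_zero hφ'0, by simpa using hφ0,
    hφ'0.hasFDerivAt_comp_norm_zero, ?_⟩
  filter_upwards [hdρ] with v hv using hv.trans (hρφ _ (norm_nonneg v))

theorem EReal.coe_le_coe_inv_mul_sub_sub_iff {t : ℝ} (ht : 0 < t) (a b c : ℝ) (z : EReal) :
    (c : EReal) ≤ ((t⁻¹ : ℝ) : EReal) * (z - a - b) ↔ ((a + b + c * t : ℝ) : EReal) ≤ z := by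
  rw [EReal.coe_inv, mul_comm, ← div_eq_mul_inv,
    EReal.le_div_iff_mul_le (EReal.coe_pos.2 ht) (EReal.coe_ne_top t),
    EReal.le_sub_iff_add_le (.inl (EReal.coe_ne_bot _)) (.inl (EReal.coe_ne_top _)),
    EReal.le_sub_iff_add_le (.inl (EReal.coe_ne_bot _)) (.inl (EReal.coe_ne_top _))]
  norm_cast
  rw [show c * t + b + a = a + b + c * t by ring]

def IsFrechetSubgradient [NormedSpace ℝ E] (f : E → EReal) (x : E)
    (L : E →L[ℝ] ℝ) : Prop :=
  ∀ ε > 0, ∀ᶠ v in 𝓝 0, f x + ((L v - ε * ‖v‖ : ℝ) : EReal) ≤ f (x + v)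

theorem le_liminf_iff_isFrechetSubgradient [NormedSpace ℝ E]
    {f : E → EReal} {x : E} {L : E →L[ℝ] ℝ} {a : ℝ} (hfx : f x = a) :
    0 ≤ liminf (fun v => ((‖v‖⁻¹ : ℝ) : EReal) * (f (x + v) - f x - ((L v : ℝ) : EReal)))
        (𝓝[≠] 0) ↔ IsFrechetSubgradient f x L := by
  have hpt : ∀ ε : ℝ, ∀ v ≠ (0 : E), (-ε : EReal) ≤ ((‖v‖⁻¹ : ℝ) : EReal) *
      (f (x + v) - f x - ((L v : ℝ) : EReal)) ↔ f x + ((L v - ε * ‖v‖ : ℝ) : EReal) ≤ f (x + v) :=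
    fun ε v hv => by
      rw [hfx, ← EReal.coe_neg, EReal.coe_le_coe_inv_mul_sub_sub_iff (norm_pos_iff.2 hv),
        ← EReal.coe_add]
      ring_nf
  rw [le_liminf_iff']
  constructor
  · intro h ε hε
    filter_upwards [eventually_nhdsWithin_iff.1 (h _ (EReal.coe_neg'.2 (neg_neg_of_pos hε)))]
      with v hv
    rcases eq_or_ne v 0 with rfl | hv0
    · simp
    · exact (hpt ε v hv0).1 (hv hv0)
  · intro h y hy
    obtain ⟨c, hyc, hc⟩ := EReal.lt_iff_exists_real_btwn.1 hy
    filter_upwards [eventually_nhdsWithin_of_eventually_nhds (h (-c) (by simpa using hc)),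
      self_mem_nhdsWithin] with v hv hv0
    refine hyc.le.trans ?_
    simpa using (hpt (-c) v hv0).2 hv

theorem IsLocalMin.isFrechetSubgradient [NormedSpace ℝ E]
    {f : E → EReal} {g : E → ℝ} {x : E} {L : E →L[ℝ] ℝ} {a : ℝ} (hfx : f x = a)
    (hmin : IsLocalMin (fun y => f y - (g y : EReal)) x) (hg : HasFDerivAt g L x) :
    IsFrechetSubgradient f x L := by
  intro ε hε
  have hmin' : ∀ᶠ v in 𝓝 0, f x - (g x : EReal) ≤ f (x + v) - (g (x + v) : EReal) :=
    (continuous_const_add x).tendsto' 0 x (add_zero x) |>.eventually hmin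
  have hlin : ∀ᶠ v in 𝓝 0, ‖g (x + v) - g x - L v‖ ≤ ε * ‖v‖ :=
    (hasFDerivAt_iff_isLittleO_nhds_zero.1 hg).def hε
  filter_upwards [hmin', hlin] with v hv hv'
  rw [hfx, ← EReal.coe_sub,
    EReal.le_sub_iff_add_le (.inl (EReal.coe_ne_bot _)) (.inl (EReal.coe_ne_top _))] at hv
  rw [hfx, ← EReal.coe_add]
  refine le_trans ?_ hv
  norm_cast
  linarith [neg_abs_le (g (x + v) - g x - L v), Real.norm_eq_abs (g (x + v) - g x - L v)]

theorem IsFrechetSubgradient.exists_contDiff_isLocalMin [InnerProductSpace ℝ E]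
    {f : E → EReal} {x : E} {L : E →L[ℝ] ℝ} {a : ℝ} (hfx : f x = a)
    (h : IsFrechetSubgradient f x L) :
    ∃ g : E → ℝ, ContDiff ℝ 1 g ∧ HasFDerivAt g L x ∧
      IsLocalMin (fun y => f y - (g y : EReal)) x := by
  set d : E → ℝ := fun v => (((a + L v : ℝ) : EReal) - f (x + v)).toReal
  have hd : ∀ ε > 0, ∀ᶠ v in 𝓝 0, d v ≤ ε * ‖v‖ := fun ε hε => by
    filter_upwards [h ε hε] with v hv
    rw [hfx, ← EReal.coe_add] at hv
    simp only [d]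
    generalize f (x + v) = z at hv ⊢
    induction z using EReal.rec with
    | bot => exact absurd hv (not_le.2 (EReal.bot_lt_coe _))
    | coe b =>
      rw [← EReal.coe_sub, EReal.toReal_coe]
      rw [EReal.coe_le_coe_iff] at hv
      linarith
    | top => simp only [EReal.sub_top, EReal.toReal_bot]; positivity
  obtain ⟨Φ, hΦ, hΦ0, hΦ'0, hdΦ⟩ := exists_contDiff_one_eventually_le hd
  have hlower : ∀ᶠ v in 𝓝 0, ((a + L v - Φ v : ℝ) : EReal) ≤ f (x + v) := by
    filter_upwards [hdΦ, h 1 one_pos] with v hdv hv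
    rw [hfx, ← EReal.coe_add] at hv
    simp only [d] at hdv
    generalize f (x + v) = z at hv hdv ⊢
    induction z using EReal.rec with
    | bot => exact absurd hv (not_le.2 (EReal.bot_lt_coe _))
    | coe b =>
      rw [← EReal.coe_sub, EReal.toReal_coe] at hdv
      exact EReal.coe_le_coe_iff.2 (by linarith)
    | top => exact le_top
  set g : E → ℝ := fun y => a + L (y - x) - Φ (y - x)
  have hsub : HasFDerivAt (fun y : E => y - x) (ContinuousLinearMap.id ℝ E) x :=
    (hasFDerivAt_id x).sub_const x
  refine ⟨g, ?_, ?_, ?_⟩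
  · exact (contDiff_const.add (L.contDiff.comp (contDiff_id.sub contDiff_const))).sub
      (hΦ.comp (contDiff_id.sub contDiff_const))
  · have hΦx : HasFDerivAt Φ (0 : E →L[ℝ] ℝ) (x - x) := by rwa [sub_self]
    have hg := ((L.hasFDerivAt.comp x hsub).const_add a).sub
      (hΦx.comp (f := fun y => y - x) x hsub)
    rwa [ContinuousLinearMap.comp_id, ContinuousLinearMap.zero_comp, sub_zero] at hg
  · have hgx : g x = a := by simp [g, hΦ0]
    filter_upwards [(tendsto_sub_nhds_zero_iff.2 tendsto_id).eventually hlower] with y hy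
    rw [hfx, hgx, ← EReal.coe_sub, sub_self, EReal.coe_zero,
      EReal.sub_nonneg (.inr (EReal.coe_ne_top _)) (.inr (EReal.coe_ne_bot _))]
    simpa [g] using hy

end

theorem mem_viscositySubdifferential_iff_liminf_nonneg_general
    {E : Type*} [NormedAddCommGroup E] [InnerProductSpace ℝ E]
    (f : E → EReal) (hbot : ∀ y, f y ≠ ⊥)
    (x : E) (hdom : f x ≠ ⊤) (ξ : E) :
    (∃ g : E → ℝ, ContDiff ℝ 1 g ∧ (∀ v, fderiv ℝ g x v = ⟪ξ, v⟫) ∧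
        IsLocalMin (fun y => f y - (g y : EReal)) x) ↔
      0 ≤ Filter.liminf
        (fun v : E => ((‖v‖⁻¹ : ℝ) : EReal) * (f (x + v) - f x - ((⟪ξ, v⟫ : ℝ) : EReal)))
        (𝓝[≠] (0 : E)) := by
  have hfx : f x = ((f x).toReal : EReal) := (EReal.coe_toReal hdom (hbot x)).symm
  refine Iff.trans ?_ (le_liminf_iff_isFrechetSubgradient (L := innerSL ℝ ξ) hfx).symm
  constructor
  · rintro ⟨g, hg, hgξ, hmin⟩
    have hderiv : fderiv ℝ g x = innerSL ℝ ξ := ContinuousLinearMap.ext hgξ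
    exact hmin.isFrechetSubgradient hfx (hderiv ▸ (hg.differentiable one_ne_zero x).hasFDerivAt)
  · intro h
    obtain ⟨g, hg, hgξ, hmin⟩ := h.exists_contDiff_isLocalMin hfx
    exact ⟨g, hg, fun v => by rw [hgξ.fderiv, innerSL_apply_apply], hmin⟩

/-- A vector `ξ` belongs to the viscosity subdifferential `D⁻f(x)` (i.e. `ξ` is the
differential at `x` of a `C¹` function `g` such that `f - g` has a local minimum at `x`)
if and only if `liminf_{v → 0} (f(exp_x v) − f(x) − ⟨ξ, v⟩)/‖v‖ ≥ 0`; here, in the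
(flat) Euclidean setting, `exp_x v = x + v`. -/
theorem mem_viscositySubdifferential_iff_liminf_nonneg
    {E : Type*} [NormedAddCommGroup E] [InnerProductSpace ℝ E] [FiniteDimensional ℝ E]
    (f : E → EReal) (hf : LowerSemicontinuous f) (hbot : ∀ y, f y ≠ ⊥)
    (x : E) (hdom : f x ≠ ⊤) (ξ : E) :
    (∃ g : E → ℝ, ContDiff ℝ 1 g ∧ (∀ v, fderiv ℝ g x v = ⟪ξ, v⟫) ∧
        IsLocalMin (fun y => f y - (g y : EReal)) x) ↔
      0 ≤ Filter.liminf
        (fun v : E => ((‖v‖⁻¹ : ℝ) : EReal) * (f (x + v) - f x - ((⟪ξ, v⟫ : ℝ) : EReal)))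
        (𝓝[≠] (0 : E)) :=
  mem_viscositySubdifferential_iff_liminf_nonneg_general f hbot x hdom ξ
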